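/- For every probability mass function Q on 𝒴, the map w ↦ D̃(w,Q) is nondecreasing on (0,1]: if 0 < w₁ ≤ w₂ ≤ 1 then D̃(w₁,Q) ≤ D̃(w₂,Q). -/

import Mathlib

open MeasureTheory

/-- The pairwise correct probability `p_c(x,y,u)` with respect to the pmf `Q` on `Y`:
`p_c(x,y,u) = Q{y' : d(x,y') < d(x,y)} + u * Q{y' : d(x,y') = d(x,y)}`. -/
noncomputable def pc {X Y : Type*} [Fintype Y] (Q : Y → ℝ) (d : X → Y → ℝ)
    (x : X) (y : Y) (u : ℝ) : ℝ :=
  (∑ y' : Y, if d x y' < d x y then Q y' else 0)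
    + u * (∑ y' : Y, if d x y' = d x y then Q y' else 0)

/-- The functional `D̃(w,Q) = w⁻¹ ⬝ E_{P ⊗ Q ⊗ Unif[0,1]}[ d(X,Y) ⬝ 1{p_c(X,Y,U) ≤ w} ]`. -/
noncomputable def Dtilde {X Y : Type*} [Fintype X] [Fintype Y]
    (P : X → ℝ) (Q : Y → ℝ) (d : X → Y → ℝ) (w : ℝ) : ℝ :=
  w⁻¹ * ∑ x : X, ∑ y : Y, P x * Q y * d x y *
    (∫ u in Set.Icc (0:ℝ) 1, if pc Q d x y u ≤ w then (1:ℝ) else 0)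

/-!
Fix `x` and write `v = d x`. The mass that `(Y, U)` puts on `{Y = y, p_c ≤ w}` is
`Q y / Q{v = v y}` times the length of `[Q{v < v y}, Q{v ≤ v y}] ∩ [0, w]`, and these masses add up
to `w`: `p_c(x, Y, U)` is uniform on `[0, 1]`. Let `c` be a `w₁`-quantile of `v`. The
mass at level `w₁` sits on `{v ≤ c}` and the increment from `w₁` to `w₂` sits on `{v ≥ c}`, so the
average of `v` against the first is at most `c`, which is at most the average against the
increment. Hence the average of `v` against the mass at level `w₂` dominates the one at level `w₁`.
-/

open Finset

lemma sum_mul_sum_le_of_threshold {ι : Type*} [Fintype ι] (v a b : ι → ℝ) (c : ℝ)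
    (ha : ∀ i, 0 ≤ a i) (hab : ∀ i, a i ≤ b i) (ha_zero : ∀ i, c < v i → a i = 0)
    (hba : ∀ i, v i < c → b i = a i) :
    (∑ i, b i) * ∑ i, v i * a i ≤ (∑ i, a i) * ∑ i, v i * b i := by
  have below : ∑ i, v i * a i ≤ c * ∑ i, a i := by
    rw [mul_sum]
    refine sum_le_sum fun i _ => ?_
    rcases le_or_gt (v i) c with h | h
    · exact mul_le_mul_of_nonneg_right h (ha i)
    · simp [ha_zero i h]
  have above : c * (∑ i, b i - ∑ i, a i) ≤ ∑ i, v i * b i - ∑ i, v i * a i := by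
    rw [← sum_sub_distrib, ← sum_sub_distrib, mul_sum]
    refine sum_le_sum fun i _ => ?_
    rcases le_or_gt c (v i) with h | h
    · rw [← mul_sub]
      exact mul_le_mul_of_nonneg_right h (sub_nonneg.2 (hab i))
    · simp [hba i h]
  have hA : 0 ≤ ∑ i, a i := sum_nonneg fun i _ => ha i
  have hBA : 0 ≤ ∑ i, b i - ∑ i, a i := sub_nonneg.2 (sum_le_sum fun i _ => hab i)
  nlinarith [mul_le_mul_of_nonneg_left below hBA, mul_le_mul_of_nonneg_left above hA]

lemma setIntegral_Icc_ite_le (t : ℝ) :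
    ∫ u in Set.Icc (0 : ℝ) 1, (if u ≤ t then 1 else 0 : ℝ) = max 0 (min 1 t) := by
  have h : (fun u : ℝ => if u ≤ t then (1 : ℝ) else 0) = (Set.Iic t).indicator fun _ => 1 := by
    funext u; simp [Set.indicator_apply]
  rw [h, setIntegral_indicator measurableSet_Iic, ← Set.Ici_inter_Iic, Set.inter_assoc,
    Set.Iic_inter_Iic, Set.Ici_inter_Iic, setIntegral_const,
    measureReal_def, Real.volume_Icc, smul_eq_mul, mul_one, sub_zero]
  rcases le_total 0 (min 1 t) with h' | h'
  · rw [ENNReal.toReal_ofReal h', max_eq_right h']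
  · rw [ENNReal.ofReal_eq_zero.mpr h', ENNReal.toReal_zero, max_eq_left h']

lemma setIntegral_Icc_ite_add_mul_le {A M w : ℝ} (hM : 0 < M) :
    ∫ u in Set.Icc (0 : ℝ) 1, (if A + u * M ≤ w then 1 else 0 : ℝ)
      = (min w (A + M) - min w A) / M := by
  obtain ⟨x, rfl⟩ : ∃ x, w = A + x * M := ⟨(w - A) / M, by field_simp; ring⟩
  have hiff : ∀ u, A + u * M ≤ A + x * M ↔ u ≤ x := fun u => by
    rw [add_le_add_iff_left, mul_le_mul_iff_left₀ hM]
  simp_rw [hiff, setIntegral_Icc_ite_le, eq_div_iff hM.ne']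
  simp only [min_def, max_def]
  split_ifs <;> nlinarith

section Masses

variable {Y : Type*} [Fintype Y] (Q v : Y → ℝ)

noncomputable def massBelow (t : ℝ) : ℝ := ∑ y, if v y < t then Q y else 0

noncomputable def massAt (t : ℝ) : ℝ := ∑ y, if v y = t then Q y else 0

noncomputable def massLE (t : ℝ) : ℝ := ∑ y, if v y ≤ t then Q y else 0

lemma massBelow_add_massAt (t : ℝ) : massBelow Q v t + massAt Q v t = massLE Q v t := by
  simp only [massBelow, massAt, massLE, ← sum_add_distrib]
  refine sum_congr rfl fun y _ => ?_
  rcases lt_trichotomy (v y) t with h | h | h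
  · simp [h, h.le, h.ne]
  · simp [h]
  · simp [h.not_gt, h.not_ge, h.ne']

variable {Q}

lemma massAt_nonneg (hQ : ∀ y, 0 ≤ Q y) (t : ℝ) : 0 ≤ massAt Q v t :=
  sum_nonneg fun y _ => ite_nonneg (hQ y) le_rfl

lemma massBelow_le_massLE (hQ : ∀ y, 0 ≤ Q y) (t : ℝ) : massBelow Q v t ≤ massLE Q v t := by
  linarith [massBelow_add_massAt Q v t, massAt_nonneg v hQ t]

lemma le_massAt_self (hQ : ∀ y, 0 ≤ Q y) (y : Y) : Q y ≤ massAt Q v (v y) := by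
  simpa [massAt] using single_le_sum (f := fun y' => if v y' = v y then Q y' else 0)
    (fun y' _ => ite_nonneg (hQ y') le_rfl) (mem_univ y)

lemma massLE_le_massBelow (hQ : ∀ y, 0 ≤ Q y) {s t : ℝ} (hst : s < t) :
    massLE Q v s ≤ massBelow Q v t :=
  sum_le_sum fun y _ => by
    split_ifs with h₁ h₂
    exacts [le_rfl, absurd (h₁.trans_lt hst) h₂, hQ y, le_rfl]

lemma exists_quantile (hQ : ∀ y, 0 ≤ Q y) (hQ1 : ∑ y, Q y = 1) {w : ℝ} (hw₀ : 0 < w)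
    (hw₁ : w ≤ 1) : ∃ c, massBelow Q v c < w ∧ w ≤ massLE Q v c := by
  obtain ⟨y₁, -, -⟩ := exists_ne_zero_of_sum_ne_zero (hQ1 ▸ one_ne_zero : ∑ y, Q y ≠ 0)
  obtain ⟨ymax, -, hmax⟩ := exists_max_image univ v ⟨y₁, mem_univ _⟩
  have htop : massLE Q v (v ymax) = 1 :=
    hQ1 ▸ sum_congr rfl fun y _ => if_pos (hmax y (mem_univ y))
  have hS : ({y | w ≤ massLE Q v (v y)} : Finset Y).Nonempty :=
    ⟨ymax, mem_filter.2 ⟨mem_univ _, htop ▸ hw₁⟩⟩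
  -- `c` is the least value whose cumulative mass reaches `w`; if already `Q{v < c} ≥ w`, the
  -- largest value below `c` would reach `w` too.
  obtain ⟨y₀, hy₀, hmin⟩ := exists_min_image _ v hS
  refine ⟨v y₀, ?_, (mem_filter.1 hy₀).2⟩
  by_contra! hle
  obtain ⟨y₂, -, hy₂⟩ := exists_ne_zero_of_sum_ne_zero (hw₀.trans_le hle).ne'
  have hT : ({y | v y < v y₀} : Finset Y).Nonempty :=
    ⟨y₂, mem_filter.2 ⟨mem_univ _, by by_contra h; simp [h] at hy₂⟩⟩
  obtain ⟨y₃, hy₃, hmax₃⟩ := exists_max_image _ v hT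
  have hbelow : massBelow Q v (v y₀) ≤ massLE Q v (v y₃) :=
    sum_le_sum fun y _ => by
      split_ifs with h₁ h₂
      exacts [le_rfl, absurd (hmax₃ y (mem_filter.2 ⟨mem_univ _, h₁⟩)) h₂, hQ y, le_rfl]
  exact (mem_filter.1 hy₃).2.not_ge (hmin y₃ (mem_filter.2 ⟨mem_univ _, hle.trans hbelow⟩))

end Masses

section SublevelMass

variable {Y : Type*} [Fintype Y] {Q : Y → ℝ} (v : Y → ℝ)

/-- `Q y · Unif{u ∈ [0,1] : p_c(y, u) ≤ w}`, where `p_c` is taken with respect to the values `v`. -/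
noncomputable def sublevelMass (Q v : Y → ℝ) (y : Y) (w : ℝ) : ℝ :=
  Q y * ∫ u in Set.Icc (0 : ℝ) 1,
    if massBelow Q v (v y) + u * massAt Q v (v y) ≤ w then 1 else 0

lemma sublevelMass_eq (hQ : ∀ y, 0 ≤ Q y) (y : Y) (w : ℝ) :
    sublevelMass Q v y w = Q y / massAt Q v (v y) *
      (min w (massLE Q v (v y)) - min w (massBelow Q v (v y))) := by
  rcases (massAt_nonneg v hQ (v y)).eq_or_lt with h | h
  · have hy : Q y = 0 := le_antisymm (h ▸ le_massAt_self v hQ y) (hQ y)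
    simp [sublevelMass, hy]
  · rw [sublevelMass, setIntegral_Icc_ite_add_mul_le h, massBelow_add_massAt]
    ring

lemma sublevelMass_nonneg (hQ : ∀ y, 0 ≤ Q y) (y : Y) (w : ℝ) : 0 ≤ sublevelMass Q v y w := by
  rw [sublevelMass_eq v hQ]
  exact mul_nonneg (div_nonneg (hQ y) (massAt_nonneg v hQ _))
    (sub_nonneg.2 (min_le_min_left w (massBelow_le_massLE v hQ _)))

lemma sublevelMass_mono (hQ : ∀ y, 0 ≤ Q y) (y : Y) : Monotone (sublevelMass Q v y) := by
  intro w₁ w₂ hw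
  rw [sublevelMass_eq v hQ, sublevelMass_eq v hQ]
  refine mul_le_mul_of_nonneg_left ?_ (div_nonneg (hQ y) (massAt_nonneg v hQ _))
  have := massBelow_le_massLE v hQ (v y)
  simp only [min_def]
  split_ifs <;> linarith

lemma sublevelMass_eq_self (hQ : ∀ y, 0 ≤ Q y) {y : Y} {w : ℝ} (h : massLE Q v (v y) ≤ w) :
    sublevelMass Q v y w = Q y := by
  rw [sublevelMass_eq v hQ, min_eq_right h, min_eq_right ((massBelow_le_massLE v hQ _).trans h),
    ← massBelow_add_massAt, add_sub_cancel_left]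
  exact div_mul_cancel_of_imp fun h0 => le_antisymm (h0 ▸ le_massAt_self v hQ y) (hQ y)

lemma sublevelMass_eq_zero (hQ : ∀ y, 0 ≤ Q y) {y : Y} {w : ℝ} (h : w ≤ massBelow Q v (v y)) :
    sublevelMass Q v y w = 0 := by
  rw [sublevelMass_eq v hQ, min_eq_left h, min_eq_left (h.trans (massBelow_le_massLE v hQ _)),
    sub_self, mul_zero]

lemma sum_sublevelMass (hQ : ∀ y, 0 ≤ Q y) (hQ1 : ∑ y, Q y = 1) {w : ℝ} (hw₀ : 0 < w)
    (hw₁ : w ≤ 1) : ∑ y, sublevelMass Q v y w = w := by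
  obtain ⟨c, hlt, hle⟩ := exists_quantile v hQ hQ1 hw₀ hw₁
  have hM : 0 < massAt Q v c := by
    linarith [massBelow_add_massAt Q v c]
  have hform : ∀ y, sublevelMass Q v y w = (if v y < c then Q y else 0)
      + (w - massBelow Q v c) / massAt Q v c * (if v y = c then Q y else 0) := by
    intro y
    rcases lt_trichotomy (v y) c with h | h | h
    · rw [sublevelMass_eq_self v hQ ((massLE_le_massBelow v hQ h).trans hlt.le), if_pos h,
        if_neg h.ne, mul_zero, add_zero]
    · rw [sublevelMass_eq v hQ, h, min_eq_left hle, min_eq_right hlt.le, if_neg (lt_irrefl c),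
        if_pos rfl]
      ring
    · rw [sublevelMass_eq_zero v hQ (hle.trans (massLE_le_massBelow v hQ h)), if_neg h.not_gt,
        if_neg h.ne']
      ring
  rw [sum_congr rfl fun y _ => hform y, sum_add_distrib, ← mul_sum]
  change massBelow Q v c + _ * massAt Q v c = w
  field_simp
  ring

lemma sum_mul_sublevelMass_div_le (hQ : ∀ y, 0 ≤ Q y) (hQ1 : ∑ y, Q y = 1) {w₁ w₂ : ℝ}
    (hw₁ : 0 < w₁) (hw₁₂ : w₁ ≤ w₂) (hw₂ : w₂ ≤ 1) :
    (∑ y, v y * sublevelMass Q v y w₁) / w₁ ≤ (∑ y, v y * sublevelMass Q v y w₂) / w₂ := by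
  obtain ⟨c, hlt, hle⟩ := exists_quantile v hQ hQ1 hw₁ (hw₁₂.trans hw₂)
  have h := sum_mul_sum_le_of_threshold v (sublevelMass Q v · w₁) (sublevelMass Q v · w₂) c
    (fun y => sublevelMass_nonneg v hQ y w₁) (fun y => sublevelMass_mono v hQ y hw₁₂)
    (fun y h => sublevelMass_eq_zero v hQ (hle.trans (massLE_le_massBelow v hQ h)))
    (fun y h => by
      have hy := (massLE_le_massBelow v hQ h).trans hlt.le
      rw [sublevelMass_eq_self v hQ (hy.trans hw₁₂), sublevelMass_eq_self v hQ hy])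
  rw [sum_sublevelMass v hQ hQ1 hw₁ (hw₁₂.trans hw₂),
    sum_sublevelMass v hQ hQ1 (hw₁.trans_le hw₁₂) hw₂] at h
  rw [div_le_div_iff₀ hw₁ (hw₁.trans_le hw₁₂)]
  linarith

end SublevelMass

lemma Dtilde_eq_sum {X Y : Type*} [Fintype X] [Fintype Y] (P : X → ℝ) (Q : Y → ℝ)
    (d : X → Y → ℝ) (w : ℝ) :
    Dtilde P Q d w = ∑ x, P x * ((∑ y, d x y * sublevelMass Q (d x) y w) / w) := by
  rw [Dtilde, mul_sum]
  refine sum_congr rfl fun x _ => ?_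
  rw [sum_div, mul_sum, mul_sum]
  refine sum_congr rfl fun y _ => ?_
  change _ = P x * (d x y * (Q y * ∫ u in Set.Icc (0 : ℝ) 1,
    if pc Q d x y u ≤ w then 1 else 0) / w)
  ring

theorem Dtilde_mono {X Y : Type*} [Fintype X] [Fintype Y]
    (P : X → ℝ) (hP0 : ∀ x, 0 ≤ P x)
    (Q : Y → ℝ) (hQ0 : ∀ y, 0 ≤ Q y) (hQ1 : ∑ y : Y, Q y = 1)
    (d : X → Y → ℝ)
    (w₁ w₂ : ℝ) (hw₁ : 0 < w₁) (hw₁₂ : w₁ ≤ w₂) (hw₂ : w₂ ≤ 1) :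
    Dtilde P Q d w₁ ≤ Dtilde P Q d w₂ := by
  rw [Dtilde_eq_sum, Dtilde_eq_sum]
  exact sum_le_sum fun x _ => mul_le_mul_of_nonneg_left
    (sum_mul_sublevelMass_div_le (d x) hQ0 hQ1 hw₁ hw₁₂ hw₂) (hP0 x)
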